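/- arXiv:1109.2652 — 6 statements merged into one kernel-verified Lean document; each statement's English description precedes it below -/
import Mathlib

section
/- Let z_1, …, z_n : ℝ → ℂ be twice-differentiable curves with |z_k(t)| < R and z_k(t) ≠ z_j(t) for k ≠ j at every time t, forming a solution of the curved n-body problem in the Poincaré disk. If the curves t ↦ e^{it} z_k(t) (k = 1,…,n) also form a solution of the same system, then for every k and every t one has 2i·ż_k(t) = z_k(t); in particular each modulus |z_k(t)| is constant in t. -/
open Complex ComplexConjugate Finset

/-- The quantity `Θ_{2,(k,j)}` appearing in the denominators of the equations of
motion of the curved `n`-body problem in the Poincaré disk of radius `R`. -/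
noncomputable def diskTheta (R : ℝ) (z w : ℂ) : ℝ :=
  ((2 * (z * conj w + w * conj z) * (R : ℂ) ^ 2
      - ((((‖z‖) ^ 2 + R ^ 2) * ((‖w‖) ^ 2 + R ^ 2) : ℝ) : ℂ)) ^ 2
    - (((R ^ 2 - (‖z‖) ^ 2) ^ 2 * (R ^ 2 - (‖w‖) ^ 2) ^ 2 : ℝ) : ℂ)).re

/-- The curves `z k` form a solution of the curved `n`-body problem in the
Poincaré disk of radius `R` with masses `m`. -/
def IsDiskSolution (R : ℝ) {n : ℕ} (m : Fin n → ℝ) (z : Fin n → ℝ → ℂ) : Prop :=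
  ∀ (k : Fin n) (t : ℝ),
    deriv (deriv (z k)) t
      = -2 * conj (z k t) * (deriv (z k) t) ^ 2
          / ((R : ℂ) ^ 2 - (((‖z k t‖) ^ 2 : ℝ) : ℂ))
        + (((R ^ 2 - (‖z k t‖) ^ 2) ^ 2 / R ^ 4 : ℝ) : ℂ) *
          ∑ j ∈ Finset.univ.erase k,
            (m j : ℂ) * (R : ℂ) * ((R : ℂ) ^ 2 - (((‖z k t‖) ^ 2 : ℝ) : ℂ))
              * ((((R ^ 2 - (‖z j t‖) ^ 2) ^ 2 : ℝ)) : ℂ)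
              * (z j t - z k t) * ((R : ℂ) ^ 2 - z k t * conj (z j t))
              / (((diskTheta R (z k t) (z j t)) ^ ((3 : ℝ) / 2) : ℝ) : ℂ)

/-! The gravitational term is equivariant under `z ↦ e^{it} z`, since all moduli and `diskTheta`
are invariant. For `w = e^{it} z` one has `ẅ = e^{it} (z̈ + 2iż - z)`, and the velocity term of
the equation of motion sees `iz + ż` in place of `ż`. Subtracting the two equations leaves
`(2iż_k - z_k)(R² + |z_k|²) = 0`, and then `e^{it/2} z_k(t)` has zero derivative, so `|z_k|` is
constant. -/

section Rotation

variable {f : ℝ → ℂ}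

lemma norm_cexp_mul_ofReal {c : ℂ} (hc : c.re = 0) (t : ℝ) : ‖exp (c * t)‖ = 1 := by
  simp [Complex.norm_exp, hc]

lemma hasDerivAt_cexp_mul_ofReal (c : ℂ) (t : ℝ) :
    HasDerivAt (fun s : ℝ => exp (c * s)) (exp (c * t) * c) t := by
  simpa using ((hasDerivAt_id t).ofReal_comp.const_mul c).cexp

lemma hasDerivAt_cexp_mul_mul {t : ℝ} (hf : DifferentiableAt ℝ f t) (c : ℂ) :
    HasDerivAt (fun s : ℝ => exp (c * s) * f s) (exp (c * t) * (c * f t + deriv f t)) t :=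
  ((hasDerivAt_cexp_mul_ofReal c t).mul hf.hasDerivAt).congr_deriv (by ring)

lemma deriv_cexp_mul_mul {t : ℝ} (hf : DifferentiableAt ℝ f t) (c : ℂ) :
    deriv (fun s : ℝ => exp (c * s) * f s) t = exp (c * t) * (c * f t + deriv f t) :=
  (hasDerivAt_cexp_mul_mul hf c).deriv

lemma deriv_deriv_cexp_mul_mul (hf : Differentiable ℝ f) {t : ℝ}
    (hf' : DifferentiableAt ℝ (deriv f) t) (c : ℂ) :
    deriv (deriv (fun s : ℝ => exp (c * s) * f s)) t
      = exp (c * t) * (c ^ 2 * f t + 2 * c * deriv f t + deriv (deriv f) t) := by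
  have h : HasDerivAt (fun s : ℝ => exp (c * s) * (c * f s + deriv f s))
      (exp (c * t) * c * (c * f t + deriv f t) + exp (c * t) * (c * deriv f t + deriv (deriv f) t))
      t :=
    (hasDerivAt_cexp_mul_ofReal c t).mul (((hf t).hasDerivAt.const_mul c).add hf'.hasDerivAt)
  rw [funext fun s : ℝ => deriv_cexp_mul_mul (hf s) c, h.deriv]
  ring

lemma norm_eq_of_two_I_mul_deriv_eq (hf : Differentiable ℝ f)
    (h : ∀ t, 2 * I * deriv f t = f t) (t t' : ℝ) : ‖f t‖ = ‖f t'‖ := by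
  have hre : (I / 2).re = 0 := by simp
  have hconst : ∀ s, deriv (fun s : ℝ => exp (I / 2 * s) * f s) s = 0 := by
    intro s
    rw [deriv_cexp_mul_mul (hf s)]
    linear_combination (-(exp (I / 2 * s) * I / 2)) * h s + exp (I / 2 * s) * deriv f s * I_sq
  have hdiff : Differentiable ℝ fun s : ℝ => exp (I / 2 * s) * f s :=
    fun s => (hasDerivAt_cexp_mul_mul (hf s) _).differentiableAt
  have := congrArg norm (is_const_of_deriv_eq_zero hdiff hconst t t')
  simpa [norm_cexp_mul_ofReal hre] using this

end Rotation

section Force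

variable {R : ℝ} {n : ℕ} {m : Fin n → ℝ}

noncomputable def diskForce (R : ℝ) (m : Fin n → ℝ) (p : Fin n → ℂ) (k : Fin n) : ℂ :=
  (((R ^ 2 - (‖p k‖) ^ 2) ^ 2 / R ^ 4 : ℝ) : ℂ) *
    ∑ j ∈ Finset.univ.erase k,
      (m j : ℂ) * (R : ℂ) * ((R : ℂ) ^ 2 - (((‖p k‖) ^ 2 : ℝ) : ℂ))
        * ((((R ^ 2 - (‖p j‖) ^ 2) ^ 2 : ℝ)) : ℂ)
        * (p j - p k) * ((R : ℂ) ^ 2 - p k * conj (p j))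
        / (((diskTheta R (p k) (p j)) ^ ((3 : ℝ) / 2) : ℝ) : ℂ)

lemma isDiskSolution_iff {z : Fin n → ℝ → ℂ} :
    IsDiskSolution R m z ↔ ∀ k t, deriv (deriv (z k)) t
      = -2 * conj (z k t) * (deriv (z k) t) ^ 2
          / ((R : ℂ) ^ 2 - (((‖z k t‖) ^ 2 : ℝ) : ℂ))
        + diskForce R m (fun j => z j t) k :=
  Iff.rfl

lemma conj_mul_self_of_norm_eq_one {e : ℂ} (he : ‖e‖ = 1) : conj e * e = 1 := by
  rw [mul_comm, mul_conj', he]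
  norm_num

lemma diskTheta_mul_left {e : ℂ} (he : ‖e‖ = 1) (z w : ℂ) :
    diskTheta R (e * z) (e * w) = diskTheta R z w := by
  have hee := conj_mul_self_of_norm_eq_one he
  have hzw : e * z * conj (e * w) = z * conj w := by
    rw [map_mul]; linear_combination z * conj w * hee
  have hwz : e * w * conj (e * z) = w * conj z := by
    rw [map_mul]; linear_combination w * conj z * hee
  simp only [diskTheta, norm_mul, he, one_mul, hzw, hwz]

lemma diskForce_mul_left {e : ℂ} (he : ‖e‖ = 1) (p : Fin n → ℂ) (k : Fin n) :
    diskForce R m (fun j => e * p j) k = e * diskForce R m p k := by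
  have hee := conj_mul_self_of_norm_eq_one he
  simp only [diskForce, norm_mul, he, one_mul, diskTheta_mul_left he]
  rw [mul_left_comm]
  congr 1
  rw [mul_sum]
  refine sum_congr rfl fun j _ => ?_
  rw [map_mul]
  linear_combination -(m j : ℂ) * R * ((R : ℂ) ^ 2 - ((‖p k‖ ^ 2 : ℝ) : ℂ))
    * (((R ^ 2 - ‖p j‖ ^ 2) ^ 2 : ℝ) : ℂ) * (e * (p j - p k)) * (p k * conj (p j))
    / ((diskTheta R (p k) (p j) ^ ((3 : ℝ) / 2) : ℝ) : ℂ) * hee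

lemma IsDiskSolution.accel_of_rotate {z : Fin n → ℝ → ℂ}
    (hz1 : ∀ k, Differentiable ℝ (z k))
    (hz2 : ∀ k, Differentiable ℝ (deriv (z k)))
    (h : IsDiskSolution R m fun k t => exp (I * t) * z k t) (k : Fin n) (t : ℝ) :
    -z k t + 2 * I * deriv (z k) t + deriv (deriv (z k)) t
      = -2 * conj (z k t) * (I * z k t + deriv (z k) t) ^ 2
          / ((R : ℂ) ^ 2 - (((‖z k t‖) ^ 2 : ℝ) : ℂ))
        + diskForce R m (fun j => z j t) k := by
  have he : ‖exp (I * t)‖ = 1 := norm_cexp_mul_ofReal I_re t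
  have hee := conj_mul_self_of_norm_eq_one he
  have hrot := isDiskSolution_iff.1 h k t
  simp only [deriv_deriv_cexp_mul_mul (hz1 k) (hz2 k t), deriv_cexp_mul_mul (hz1 k t),
    norm_mul, map_mul, he, one_mul, diskForce_mul_left he] at hrot
  refine mul_left_cancel₀ (exp_ne_zero (I * t)) ?_
  linear_combination hrot - exp (I * t) * z k t * I_sq
    - 2 * exp (I * t) * conj (z k t) * (I * z k t + deriv (z k) t) ^ 2
      / ((R : ℂ) ^ 2 - (((‖z k t‖) ^ 2 : ℝ) : ℂ)) * hee

end Force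

lemma two_I_mul_eq_of_accel_eq {R : ℝ} {p q a F : ℂ} (hp : ‖p‖ < R)
    (h : a = -2 * conj p * q ^ 2 / ((R : ℂ) ^ 2 - (((‖p‖) ^ 2 : ℝ) : ℂ)) + F)
    (h' : -p + 2 * I * q + a
      = -2 * conj p * (I * p + q) ^ 2 / ((R : ℂ) ^ 2 - (((‖p‖) ^ 2 : ℝ) : ℂ)) + F) :
    2 * I * q = p := by
  have hD : (R : ℂ) ^ 2 - (((‖p‖) ^ 2 : ℝ) : ℂ) ≠ 0 := by
    norm_cast
    nlinarith [norm_nonneg p]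
  have hS : (R : ℂ) ^ 2 + (((‖p‖) ^ 2 : ℝ) : ℂ) ≠ 0 := by
    norm_cast
    nlinarith [norm_nonneg p]
  have hpp : conj p * p = (((‖p‖) ^ 2 : ℝ) : ℂ) := by
    rw [mul_comm, mul_conj']
    push_cast
    rfl
  have hfactor : (2 * I * q - p) * ((R : ℂ) ^ 2 + (((‖p‖) ^ 2 : ℝ) : ℂ)) = 0 := by
    rw [h] at h'
    field_simp at h'
    linear_combination h' - 2 * (2 * I * q - p) * hpp - 2 * conj p * p * p * I_sq
  linear_combination (mul_eq_zero.1 hfactor).resolve_right hS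

theorem elliptic_action_invariance_general (R : ℝ) (n : ℕ)
    (m : Fin n → ℝ)
    (z : Fin n → ℝ → ℂ)
    (hz1 : ∀ k, Differentiable ℝ (z k))
    (hz2 : ∀ k, Differentiable ℝ (deriv (z k)))
    (hdisk : ∀ k t, ‖z k t‖ < R)
    (hsol : IsDiskSolution R m z)
    (hsol' : IsDiskSolution R m (fun k t => Complex.exp (Complex.I * (t : ℂ)) * z k t)) :
    (∀ k t, 2 * Complex.I * deriv (z k) t = z k t) ∧
      (∀ k (t t' : ℝ), ‖z k t‖ = ‖z k t'‖) := by
  have key : ∀ k t, 2 * I * deriv (z k) t = z k t := fun k t =>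
    two_I_mul_eq_of_accel_eq (hdisk k t) (hsol k t) (hsol'.accel_of_rotate hz1 hz2 k t)
  exact ⟨key, fun k => norm_eq_of_two_I_mul_deriv_eq (hz1 k) (key k)⟩

/-- If a solution of the curved `n`-body problem in the Poincaré disk remains a
solution after the action `z ↦ e^{it} z`, then `2i ż_k = z_k` for all `k` and `t`;
in particular each `|z_k(t)|` is constant in `t`. -/
theorem elliptic_action_invariance (R : ℝ) (hR : 0 < R) (n : ℕ) (hn : 2 ≤ n)
    (m : Fin n → ℝ) (hm : ∀ k, 0 < m k)
    (z : Fin n → ℝ → ℂ)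
    (hz1 : ∀ k, Differentiable ℝ (z k))
    (hz2 : ∀ k, Differentiable ℝ (deriv (z k)))
    (hdisk : ∀ k t, ‖z k t‖ < R)
    (hsep : ∀ k j, k ≠ j → ∀ t, z k t ≠ z j t)
    (hsol : IsDiskSolution R m z)
    (hsol' : IsDiskSolution R m (fun k t => Complex.exp (Complex.I * (t : ℂ)) * z k t)) :
    (∀ k t, 2 * Complex.I * deriv (z k) t = z k t) ∧
      (∀ k (t t' : ℝ), ‖z k t‖ = ‖z k t'‖) :=
  elliptic_action_invariance_general R n m z hz1 hz2 hdisk hsol hsol'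
end

section
/- Let R > 0, m_1, m_2 > 0 and α ∈ (0, R), and define f : (−R, R) → ℝ by f(x) = m_1 α (R² + α²)(R² − x²)² − m_2 x (R² + x²)(R² − α²)². Then f has no double roots: there is no x ∈ (−R, R) with f(x) = 0 and f′(x) = 0. -/
/-! With `A = m₁ α (R² + α²) > 0` and `B = m₂ (R² − α²)² > 0` we have
`f(x) = A (R² − x²)² − B x (R² + x²)`. For `x ≤ 0` both terms make `f(x) > 0`, so every root
in `(−R, R)` is positive; and `f′(x) = −4 A x (R² − x²) − B (R² + 3x²)` is negative for
`0 < x < R`. -/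

def equilibriumPoly (A B R x : ℝ) : ℝ :=
  A * (R ^ 2 - x ^ 2) ^ 2 - B * x * (R ^ 2 + x ^ 2)

theorem hasDerivAt_equilibriumPoly (A B R x : ℝ) :
    HasDerivAt (equilibriumPoly A B R)
      (-4 * A * x * (R ^ 2 - x ^ 2) - B * (R ^ 2 + 3 * x ^ 2)) x := by
  have h := ((((hasDerivAt_pow 2 x).const_sub (R ^ 2)).pow 2).const_mul A).sub
    (((hasDerivAt_id x).const_mul B).mul ((hasDerivAt_pow 2 x).const_add (R ^ 2)))
  refine h.congr_deriv ?_
  simp only [Nat.cast_ofNat, Nat.add_one_sub_one, pow_one, mul_one, id_eq]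
  ring

theorem equilibriumPoly_pos_of_nonpos {A B R x : ℝ} (hA : 0 < A) (hB : 0 ≤ B)
    (hxR : x ^ 2 ≠ R ^ 2) (hx : x ≤ 0) : 0 < equilibriumPoly A B R x := by
  have hsq : 0 < A * (R ^ 2 - x ^ 2) ^ 2 :=
    mul_pos hA (even_two.pow_pos (sub_ne_zero.mpr hxR.symm))
  have hlin : B * x * (R ^ 2 + x ^ 2) ≤ 0 :=
    mul_nonpos_of_nonpos_of_nonneg (mul_nonpos_of_nonneg_of_nonpos hB hx) (by positivity)
  unfold equilibriumPoly
  linarith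

theorem pos_of_equilibriumPoly_eq_zero {A B R x : ℝ} (hA : 0 < A) (hB : 0 ≤ B)
    (hxR : x ^ 2 ≠ R ^ 2) (hf : equilibriumPoly A B R x = 0) : 0 < x := by
  by_contra! hx
  exact (equilibriumPoly_pos_of_nonpos hA hB hxR hx).ne' hf

theorem deriv_equilibriumPoly_neg {A B R x : ℝ} (hA : 0 ≤ A) (hB : 0 < B) (hx : 0 < x)
    (hxR : x ^ 2 ≤ R ^ 2) : deriv (equilibriumPoly A B R) x < 0 := by
  rw [(hasDerivAt_equilibriumPoly A B R x).deriv]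
  have h₁ : 0 ≤ A * x * (R ^ 2 - x ^ 2) := by
    have := sub_nonneg.mpr hxR
    positivity
  have h₂ : 0 < B * (R ^ 2 + 3 * x ^ 2) := by positivity
  linarith

theorem no_double_roots_general (R m₁ m₂ α : ℝ) (hm₁ : 0 < m₁) (hm₂ : 0 < m₂)
    (hα : α ∈ Set.Ioo 0 R) :
    ¬ ∃ x ∈ Set.Ioo (-R) R,
        (fun x : ℝ => m₁ * α * (R ^ 2 + α ^ 2) * (R ^ 2 - x ^ 2) ^ 2
            - m₂ * x * (R ^ 2 + x ^ 2) * (R ^ 2 - α ^ 2) ^ 2) x = 0 ∧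
        deriv (fun x : ℝ => m₁ * α * (R ^ 2 + α ^ 2) * (R ^ 2 - x ^ 2) ^ 2
            - m₂ * x * (R ^ 2 + x ^ 2) * (R ^ 2 - α ^ 2) ^ 2) x = 0 := by
  rintro ⟨x, ⟨hxl, hxr⟩, hf, hf'⟩
  set A := m₁ * α * (R ^ 2 + α ^ 2)
  set B := m₂ * (R ^ 2 - α ^ 2) ^ 2
  have hfun : (fun x : ℝ => A * (R ^ 2 - x ^ 2) ^ 2
      - m₂ * x * (R ^ 2 + x ^ 2) * (R ^ 2 - α ^ 2) ^ 2) = equilibriumPoly A B R := by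
    ext y; simp only [equilibriumPoly, B]; ring
  rw [hfun] at hf hf'
  obtain ⟨hα₀, hαR⟩ := hα
  have hA : 0 < A := by positivity
  have hB : 0 < B := mul_pos hm₂ (pow_pos (sub_pos.mpr (sq_lt_sq' (by linarith) hαR)) 2)
  have hxR : x ^ 2 < R ^ 2 := sq_lt_sq' hxl hxr
  have hx := pos_of_equilibriumPoly_eq_zero hA hB.le hxR.ne hf
  exact (deriv_equilibriumPoly_neg hA.le hB hx hxR.le).ne hf'

/-- The function `f(x) = m₁ α (R² + α²)(R² − x²)² − m₂ x (R² + x²)(R² − α²)²`,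
whose zeroes give the elliptic relative equilibria of the curved 2-body problem
in the Poincaré disk, has no double roots in `(−R, R)`. -/
theorem no_double_roots (R m₁ m₂ α : ℝ) (hR : 0 < R) (hm₁ : 0 < m₁) (hm₂ : 0 < m₂)
    (hα : α ∈ Set.Ioo 0 R) :
    ¬ ∃ x ∈ Set.Ioo (-R) R,
        (fun x : ℝ => m₁ * α * (R ^ 2 + α ^ 2) * (R ^ 2 - x ^ 2) ^ 2
            - m₂ * x * (R ^ 2 + x ^ 2) * (R ^ 2 - α ^ 2) ^ 2) x = 0 ∧
        deriv (fun x : ℝ => m₁ * α * (R ^ 2 + α ^ 2) * (R ^ 2 - x ^ 2) ^ 2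
            - m₂ * x * (R ^ 2 + x ^ 2) * (R ^ 2 - α ^ 2) ^ 2) x = 0 :=
  no_double_roots_general R m₁ m₂ α hm₁ hm₂ hα
end

section
/- Let R > 0, m_1, m_2 > 0 and α ∈ (0, R). Then there exists a unique r ∈ (0, R) such that m_1 α (R² + α²)(R² − r²)² = m_2 r (R² + r²)(R² − α²)². -/
/-!
Clearing the equation to `m₂ (R² − α²)² · r (R² + r²) − m₁ α (R² + α²) · (R² − r²)² = 0`, the
left-hand side is strictly increasing in `r` on `[0, R]`: the first term is a positive multiple of
the increasing cubic `r ↦ r (R² + r²)`, and `(R² − r²)²` decreases there. It is negative at `0`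
and positive at `R`, so the intermediate value theorem gives exactly one root in `(0, R)`.
-/

open Set

theorem existsUnique_mem_Ioo_eq_of_strictMonoOn {α δ : Type*}
    [ConditionallyCompleteLinearOrder α] [TopologicalSpace α] [OrderTopology α] [DenselyOrdered α]
    [LinearOrder δ] [TopologicalSpace δ] [OrderClosedTopology δ]
    {f : α → δ} {a b : α} {y : δ} (hab : a ≤ b) (hf : ContinuousOn f (Icc a b))
    (hmono : StrictMonoOn f (Icc a b)) (hy : y ∈ Ioo (f a) (f b)) :
    ∃! x, x ∈ Ioo a b ∧ f x = y := by
  obtain ⟨x, hx, rfl⟩ := intermediate_value_Ioo hab hf hy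
  exact ⟨x, ⟨hx, rfl⟩, fun x' ⟨hx', hfx'⟩ =>
    hmono.injOn (Ioo_subset_Icc_self hx') (Ioo_subset_Icc_self hx) hfx'⟩

theorem strictMono_mul_sq_add_sq (c : ℝ) : StrictMono fun r : ℝ => r * (c ^ 2 + r ^ 2) := by
  intro x y hxy
  have hcube : x ^ 3 < y ^ 3 := Odd.strictMono_pow (by decide) hxy
  nlinarith [mul_le_mul_of_nonneg_left hxy.le (sq_nonneg c)]

theorem antitoneOn_sq_sub_sq_sq (R : ℝ) :
    AntitoneOn (fun r : ℝ => (R ^ 2 - r ^ 2) ^ 2) (Icc 0 R) := by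
  intro x ⟨hx0, _⟩ y ⟨_, hyR⟩ hxy
  have hsq : y ^ 2 ≤ R ^ 2 := pow_le_pow_left₀ (hx0.trans hxy) hyR 2
  have hsq' : x ^ 2 ≤ y ^ 2 := pow_le_pow_left₀ hx0 hxy 2
  exact pow_le_pow_left₀ (by linarith) (by linarith) 2

theorem strictMonoOn_mul_cubic_sub_mul_sq (R a b : ℝ) (ha : 0 < a) (hb : 0 ≤ b) :
    StrictMonoOn (fun r : ℝ => a * (r * (R ^ 2 + r ^ 2)) - b * (R ^ 2 - r ^ 2) ^ 2) (Icc 0 R) := by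
  intro x hx y hy hxy
  have hcubic := mul_lt_mul_of_pos_left (strictMono_mul_sq_add_sq R hxy) ha
  have hsq := mul_le_mul_of_nonneg_left (antitoneOn_sq_sub_sq_sq R hx hy hxy.le) hb
  dsimp only at hcubic hsq ⊢
  linarith

theorem exists_unique_radius_general (R m₁ m₂ α : ℝ) (hm₁ : 0 < m₁) (hm₂ : 0 < m₂)
    (hα : α ∈ Set.Ioo 0 R) :
    ∃! r : ℝ, r ∈ Set.Ioo 0 R ∧
      m₁ * α * (R ^ 2 + α ^ 2) * (R ^ 2 - r ^ 2) ^ 2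
        = m₂ * r * (R ^ 2 + r ^ 2) * (R ^ 2 - α ^ 2) ^ 2 := by
  obtain ⟨hα0, hαR⟩ := hα
  have hR : 0 < R := hα0.trans hαR
  have ha : 0 < m₂ * (R ^ 2 - α ^ 2) ^ 2 := by
    have : α ^ 2 < R ^ 2 := pow_lt_pow_left₀ hαR hα0.le two_ne_zero
    have : R ^ 2 - α ^ 2 ≠ 0 := by linarith
    positivity
  have hb : 0 < m₁ * α * (R ^ 2 + α ^ 2) := by positivity
  have hroot := existsUnique_mem_Ioo_eq_of_strictMonoOn (y := 0) hR.le (by fun_prop)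
    (strictMonoOn_mul_cubic_sub_mul_sq R _ _ ha hb.le)
    ⟨by norm_num; positivity, by norm_num; positivity⟩
  refine (existsUnique_congr fun r => and_congr_right fun _ => ?_).mp hroot
  constructor <;> intro h <;> linarith

/-- For any `R > 0`, masses `m₁, m₂ > 0` and radius `α ∈ (0, R)`, there exists a
unique `r ∈ (0, R)` with `m₁ α (R² + α²)(R² − r²)² = m₂ r (R² + r²)(R² − α²)²`. -/
theorem exists_unique_radius (R m₁ m₂ α : ℝ) (hR : 0 < R) (hm₁ : 0 < m₁) (hm₂ : 0 < m₂)
    (hα : α ∈ Set.Ioo 0 R) :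
    ∃! r : ℝ, r ∈ Set.Ioo 0 R ∧
      m₁ * α * (R ^ 2 + α ^ 2) * (R ^ 2 - r ^ 2) ^ 2
        = m₂ * r * (R ^ 2 + r ^ 2) * (R ^ 2 - α ^ 2) ^ 2 :=
  exists_unique_radius_general R m₁ m₂ α hm₁ hm₂ hα
end

section
/- Let R > 0, m_1, m_2 > 0, α ∈ (0, R), and let r ∈ (0, R) satisfy m_1 α (R² + α²)(R² − r²)² = m_2 r (R² + r²)(R² − α²)². Then: (1) if m_2 > m_1 then r < α; (2) if m_1 = m_2 then r = α; (3) if m_1 > m_2 then r > α. -/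
/-!
Dividing the equation by `(R² - α²)² (R² - r²)²` turns it into `m₁ g(α) = m₂ g(r)` with
`g(x) = x (R² + x²) / (R² - x²)²`, which is positive on `(0, R)` and strictly increasing on
`(-R, R)`: cross-multiplied, `g(y) - g(x)` has the sign of
`(y - x) (R² - xy) ((R² + xy)² + R² (x + y)²)`. A larger mass therefore forces a smaller value
of `g`, hence a smaller radius.
-/

open Set

theorem StrictMonoOn.cmp_of_mul_eq {β 𝕜 : Type*} [LinearOrder β] [Field 𝕜] [LinearOrder 𝕜]
    [IsStrictOrderedRing 𝕜] {g : β → 𝕜} {s : Set β} (hg : StrictMonoOn g s) {a b : β}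
    (ha : a ∈ s) (hb : b ∈ s) (hga : 0 < g a) (hgb : 0 < g b) {m₁ m₂ : 𝕜} (hm₁ : 0 < m₁)
    (h : m₁ * g a = m₂ * g b) :
    (m₁ < m₂ → b < a) ∧ (m₁ = m₂ → b = a) ∧ (m₂ < m₁ → a < b) := by
  refine ⟨fun hm => ?_, fun hm => ?_, fun hm => ?_⟩
  · have : m₂ * g b < m₂ * g a := h ▸ mul_lt_mul_of_pos_right hm hga
    exact (hg.lt_iff_lt hb ha).1 (lt_of_mul_lt_mul_left this (hm₁.trans hm).le)
  · subst hm
    exact (hg.injOn ha hb (mul_left_cancel₀ hm₁.ne' h)).symm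
  · have : m₁ * g a < m₁ * g b := h ▸ mul_lt_mul_of_pos_right hm hgb
    exact (hg.lt_iff_lt ha hb).1 (lt_of_mul_lt_mul_left this hm₁.le)

noncomputable def equilibriumRatio (R x : ℝ) : ℝ :=
  x * (R ^ 2 + x ^ 2) / (R ^ 2 - x ^ 2) ^ 2

lemma equilibriumRatio_pos {R x : ℝ} (hx : x ∈ Ioo 0 R) : 0 < equilibriumRatio R x := by
  obtain ⟨hx0, hxR⟩ := hx
  have : 0 < R ^ 2 - x ^ 2 := by nlinarith
  unfold equilibriumRatio
  positivity

lemma strictMonoOn_equilibriumRatio (R : ℝ) : StrictMonoOn (equilibriumRatio R) (Ioo (-R) R) := by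
  rintro x ⟨hxl, hxr⟩ y ⟨hyl, hyr⟩ hxy
  have hx : 0 < R ^ 2 - x ^ 2 := by nlinarith
  have hy : 0 < R ^ 2 - y ^ 2 := by nlinarith
  have hRx := sub_pos.2 hxr
  have hRy := sub_pos.2 hyr
  have hxR := neg_lt_iff_pos_add.1 hxl
  have hyR := neg_lt_iff_pos_add.1 hyl
  have hRxy : 0 < R ^ 2 - x * y := by nlinarith [mul_pos hRx hyR, mul_pos hxR hRy]
  have hRxy' : 0 < R ^ 2 + x * y := by nlinarith [mul_pos hxR hyR, mul_pos hRx hRy]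
  have hcross : y * (R ^ 2 + y ^ 2) * (R ^ 2 - x ^ 2) ^ 2 - x * (R ^ 2 + x ^ 2) * (R ^ 2 - y ^ 2) ^ 2
      = (y - x) * (R ^ 2 - x * y) * ((R ^ 2 + x * y) ^ 2 + R ^ 2 * (x + y) ^ 2) := by ring
  have : 0 < (y - x) * (R ^ 2 - x * y) * ((R ^ 2 + x * y) ^ 2 + R ^ 2 * (x + y) ^ 2) :=
    mul_pos (mul_pos (sub_pos.2 hxy) hRxy) (by positivity)
  unfold equilibriumRatio
  rw [div_lt_div_iff₀ (by positivity) (by positivity)]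
  linarith

theorem radius_mass_comparison_general (R m₁ m₂ α r : ℝ) (hm₁ : 0 < m₁)
    (hα : α ∈ Set.Ioo 0 R) (hr : r ∈ Set.Ioo 0 R)
    (heq : m₁ * α * (R ^ 2 + α ^ 2) * (R ^ 2 - r ^ 2) ^ 2
      = m₂ * r * (R ^ 2 + r ^ 2) * (R ^ 2 - α ^ 2) ^ 2) :
    (m₁ < m₂ → r < α) ∧ (m₁ = m₂ → r = α) ∧ (m₂ < m₁ → α < r) := by
  have hsub {x : ℝ} (hx : x ∈ Ioo 0 R) : x ∈ Ioo (-R) R := ⟨by linarith [hx.1, hx.2], hx.2⟩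
  have hα' : 0 < R ^ 2 - α ^ 2 := by nlinarith [hα.1, hα.2]
  have hr' : 0 < R ^ 2 - r ^ 2 := by nlinarith [hr.1, hr.2]
  have hratio : m₁ * equilibriumRatio R α = m₂ * equilibriumRatio R r := by
    unfold equilibriumRatio
    field_simp
    linarith
  exact (strictMonoOn_equilibriumRatio R).cmp_of_mul_eq (hsub hα) (hsub hr)
    (equilibriumRatio_pos hα) (equilibriumRatio_pos hr) hm₁ hratio

/-- Comparison of the radii of the two bodies in an elliptic relative equilibrium of
the curved 2-body problem in the Poincaré disk, according to the relative sizes of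
the masses. -/
theorem radius_mass_comparison (R m₁ m₂ α r : ℝ) (hR : 0 < R) (hm₁ : 0 < m₁) (hm₂ : 0 < m₂)
    (hα : α ∈ Set.Ioo 0 R) (hr : r ∈ Set.Ioo 0 R)
    (heq : m₁ * α * (R ^ 2 + α ^ 2) * (R ^ 2 - r ^ 2) ^ 2
      = m₂ * r * (R ^ 2 + r ^ 2) * (R ^ 2 - α ^ 2) ^ 2) :
    (m₁ < m₂ → r < α) ∧ (m₁ = m₂ → r = α) ∧ (m₂ < m₁ → α < r) :=
  radius_mass_comparison_general R m₁ m₂ α r hm₁ hα hr heq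
end

section
/- Let R > 0 and r ∈ (0, R). For all u, v ∈ (0, 1], the equation u²(1 − v)[(r² − R²)² + R² r² u]³ = v²(1 − u)[(r² − R²)² + R² r² v]³ holds only if u = v. -/
/-! Writing `A = (r² − R²)² > 0` and `B = R²r² ≥ 0`, the factor `t ↦ t²(A + Bt)³` is strictly
increasing on `t ≥ 0` while `t ↦ 1 − t` is decreasing and nonnegative, so for `u < v` the
left-hand side is strictly smaller than the right-hand side. -/

lemma sq_mul_affine_pow_three_lt {A B u v : ℝ} (hA : 0 < A) (hB : 0 ≤ B) (hu : 0 ≤ u)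
    (huv : u < v) : u ^ 2 * (A + B * u) ^ 3 < v ^ 2 * (A + B * v) ^ 3 := by
  have hAu : 0 < A + B * u := by positivity
  have hAuv : A + B * u ≤ A + B * v := by gcongr
  exact mul_lt_mul (pow_lt_pow_left₀ huv hu two_ne_zero) (pow_le_pow_left₀ hAu.le hAuv 3)
    (by positivity) (by positivity)

lemma sq_mul_one_sub_mul_affine_pow_three_lt {A B u v : ℝ} (hA : 0 < A) (hB : 0 ≤ B)
    (hu : 0 ≤ u) (huv : u < v) (hv : v ≤ 1) :
    u ^ 2 * (1 - v) * (A + B * u) ^ 3 < v ^ 2 * (1 - u) * (A + B * v) ^ 3 := by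
  have hgu : 0 ≤ u ^ 2 * (A + B * u) ^ 3 := by positivity
  have hg := sq_mul_affine_pow_three_lt hA hB hu huv
  calc u ^ 2 * (1 - v) * (A + B * u) ^ 3 = (1 - v) * (u ^ 2 * (A + B * u) ^ 3) := by ring
    _ ≤ (1 - u) * (u ^ 2 * (A + B * u) ^ 3) := by gcongr
    _ < (1 - u) * (v ^ 2 * (A + B * v) ^ 3) := by gcongr; linarith
    _ = v ^ 2 * (1 - u) * (A + B * v) ^ 3 := by ring

/-- For `0 < r < R` and `u, v ∈ (0, 1]`, the equation
`u²(1 − v)[(r² − R²)² + R²r²u]³ = v²(1 − u)[(r² − R²)² + R²r²v]³` holds only when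
`u = v`. -/
theorem uv_symmetric_equation (R r : ℝ) (hr : 0 < r) (hrR : r < R) :
    ∀ u v : ℝ, u ∈ Set.Ioc 0 1 → v ∈ Set.Ioc 0 1 →
      u ^ 2 * (1 - v) * ((r ^ 2 - R ^ 2) ^ 2 + R ^ 2 * r ^ 2 * u) ^ 3
        = v ^ 2 * (1 - u) * ((r ^ 2 - R ^ 2) ^ 2 + R ^ 2 * r ^ 2 * v) ^ 3 →
      u = v := by
  intro u v hu hv heq
  have hA : 0 < (r ^ 2 - R ^ 2) ^ 2 := by
    have : r ^ 2 < R ^ 2 := by gcongr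
    exact sq_pos_of_neg (by linarith)
  have hB : 0 ≤ R ^ 2 * r ^ 2 := by positivity
  by_contra hne
  rcases lt_or_gt_of_ne hne with huv | hvu
  · exact (sq_mul_one_sub_mul_affine_pow_three_lt hA hB hu.1.le huv hv.2).ne heq
  · exact (sq_mul_one_sub_mul_affine_pow_three_lt hA hB hv.1.le hvu hu.2).ne' heq
end

section
/- Let m_1, m_2 > 0 and let w_1, w_2 ∈ ℂ with Im w_1 > 0, Im w_2 > 0, Re w_1 ≠ 0, Re w_2 ≠ 0 and Im(w_2 w_1) ≠ 0. Put y_k = Im w_k and β_k = Im w_k / Re w_k for k = 1, 2. Then the complex equation m_1 β_2 y_2 (|w_1|² − w_2 w_1) = −m_2 β_1 y_1 (|w_2|² − w_2 w_1) holds if and only if m_1 β_2 y_2 = −m_2 β_1 y_1 and |w_1| = |w_2| (in particular β_1 and β_2 then have opposite signs). -/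
open Complex

theorem ofReal_mul_sub_eq_ofReal_mul_sub_iff {a b r s : ℝ} {z : ℂ} (ha : a ≠ 0)
    (hz : z.im ≠ 0) : (a : ℂ) * (r - z) = b * (s - z) ↔ a = b ∧ r = s := by
  refine ⟨fun h => ?_, fun ⟨hab, hrs⟩ => by rw [hab, hrs]⟩
  obtain ⟨hre, him⟩ := Complex.ext_iff.mp h
  simp only [mul_re, mul_im, sub_re, sub_im, ofReal_re, ofReal_im] at hre him
  have hab : a = b := mul_right_cancel₀ hz (by linarith)
  subst hab
  exact ⟨rfl, by simpa [ha, sub_left_inj] using hre⟩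

theorem hyperbolic_slope_condition_general (m₁ m₂ : ℝ) (hm₁ : 0 < m₁)
    (w₁ w₂ : ℂ) (h₂ : 0 < w₂.im)
    (hre₂ : w₂.re ≠ 0) (him : (w₂ * w₁).im ≠ 0) :
    ((m₁ : ℂ) * ((w₂.im / w₂.re : ℝ) : ℂ) * ((w₂.im : ℝ) : ℂ)
        * (((‖w₁‖ ^ 2 : ℝ) : ℂ) - w₂ * w₁)
      = -(m₂ : ℂ) * ((w₁.im / w₁.re : ℝ) : ℂ) * ((w₁.im : ℝ) : ℂ)
        * (((‖w₂‖ ^ 2 : ℝ) : ℂ) - w₂ * w₁)) ↔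
    (m₁ * (w₂.im / w₂.re) * w₂.im = -(m₂ * (w₁.im / w₁.re) * w₁.im) ∧
      ‖w₁‖ = ‖w₂‖) := by
  have ha : m₁ * (w₂.im / w₂.re) * w₂.im ≠ 0 :=
    mul_ne_zero (mul_ne_zero hm₁.ne' (div_ne_zero h₂.ne' hre₂)) h₂.ne'
  rw [← sq_eq_sq₀ (norm_nonneg w₁) (norm_nonneg w₂),
    ← ofReal_mul_sub_eq_ofReal_mul_sub_iff ha him]
  push_cast
  ring_nf

/-- Condition for two bodies on half lines through the origin of the Poincaré upper
half plane to form a hyperbolic relative equilibrium: the complex equation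
`m₁ β₂ y₂ (|w₁|² − w₂w₁) = −m₂ β₁ y₁ (|w₂|² − w₂w₁)` holds iff `m₁ β₂ y₂ = −m₂ β₁ y₁`
and `|w₁| = |w₂|`. -/
theorem hyperbolic_slope_condition (m₁ m₂ : ℝ) (hm₁ : 0 < m₁) (hm₂ : 0 < m₂)
    (w₁ w₂ : ℂ) (h₁ : 0 < w₁.im) (h₂ : 0 < w₂.im)
    (hre₁ : w₁.re ≠ 0) (hre₂ : w₂.re ≠ 0) (him : (w₂ * w₁).im ≠ 0) :
    ((m₁ : ℂ) * ((w₂.im / w₂.re : ℝ) : ℂ) * ((w₂.im : ℝ) : ℂ)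
        * (((‖w₁‖ ^ 2 : ℝ) : ℂ) - w₂ * w₁)
      = -(m₂ : ℂ) * ((w₁.im / w₁.re : ℝ) : ℂ) * ((w₁.im : ℝ) : ℂ)
        * (((‖w₂‖ ^ 2 : ℝ) : ℂ) - w₂ * w₁)) ↔
    (m₁ * (w₂.im / w₂.re) * w₂.im = -(m₂ * (w₁.im / w₁.re) * w₁.im) ∧
      ‖w₁‖ = ‖w₂‖) :=
  hyperbolic_slope_condition_general m₁ m₂ hm₁ w₁ w₂ h₂ hre₂ him
end
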